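/- Let x ∈ ℂⁿ be s-sparse with T = supp(x), let X ∈ ℂ^{n×n}, m > 0, and let A₁,…,A_l, m₁,…,m_l, v_i, q_i be as in the golfing scheme (v₀ = 0, q_i = sgn(x) − P_T v_i, v_i = (m/m_i) A_i* A_i X P_T q_{i−1} + v_{i−1}). Suppose that for every 1 ≤ i ≤ l the conditions ‖P_T(I − (m/m_i) A_i* A_i X) P_T q_{i−1}‖₂ ≤ c_i ‖q_{i−1}‖₂ and ‖(m/m_i) P_{T^c} A_i* A_i X P_T q_{i−1}‖_∞ ≤ t_i ‖q_{i−1}‖₂ hold. Then ‖q_l‖₂ ≤ √s · ∏_{i=1}^{l} c_i and ‖(v_l)_{T^c}‖_∞ ≤ √s · ( t₁ + Σ_{i=2}^{l} t_i ∏_{j=1}^{i−1} c_j ). -/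

import Mathlib

open MeasureTheory Matrix Finset ComplexConjugate
open scoped BigOperators Matrix ComplexOrder

noncomputable section

/-- The ℓ₂ (Euclidean) norm of a vector in ℂⁿ. -/
def l2norm {n : ℕ} (v : Fin n → ℂ) : ℝ := Real.sqrt (∑ i, ‖v i‖ ^ 2)

/-- The ℓ₁ norm of a vector in ℂⁿ. -/
def l1norm {n : ℕ} (v : Fin n → ℂ) : ℝ := ∑ i, ‖v i‖

/-- The ℓ∞ norm (maximal absolute entry) of a vector in ℂⁿ. -/
def linfNorm {n : ℕ} (v : Fin n → ℂ) : ℝ := ⨆ i, ‖v i‖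

/-- The sparsity ‖v‖₀ of a vector: the cardinality of its support. -/
def sparsity {n : ℕ} (v : Fin n → ℂ) : ℕ := (Finset.univ.filter fun i => v i ≠ 0).card

/-- Largest s-sparse eigenvalue λ_max(s, M) = sup over s-sparse v ≠ 0 of ‖Mv‖₂/‖v‖₂. -/
def sparseMax {n : ℕ} (s : ℕ) (M : Matrix (Fin n) (Fin n) ℂ) : ℝ :=
  ⨆ v : {v : Fin n → ℂ // v ≠ 0 ∧ sparsity v ≤ s}, l2norm (M.mulVec v.1) / l2norm v.1

/-- Smallest s-sparse eigenvalue λ_min(s, M). -/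
def sparseMin {n : ℕ} (s : ℕ) (M : Matrix (Fin n) (Fin n) ℂ) : ℝ :=
  ⨅ v : {v : Fin n → ℂ // v ≠ 0 ∧ sparsity v ≤ s}, l2norm (M.mulVec v.1) / l2norm v.1

/-- s-sparse condition number cond(s, M) = λ_max(s,M)/λ_min(s,M). -/
def sparseCond {n : ℕ} (s : ℕ) (M : Matrix (Fin n) (Fin n) ℂ) : ℝ :=
  sparseMax s M / sparseMin s M

/-- Operator norm (largest singular value) of a square matrix. -/
def opNorm {n : ℕ} (M : Matrix (Fin n) (Fin n) ℂ) : ℝ :=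
  ⨆ v : {v : Fin n → ℂ // v ≠ 0}, l2norm (M.mulVec v.1) / l2norm v.1

/-- The rank-one matrix a a*. -/
def outer {n : ℕ} (a : Fin n → ℂ) : Matrix (Fin n) (Fin n) ℂ :=
  Matrix.of fun i j => a i * conj (a j)

/-- The covariance matrix E[a a*] of the distribution F. -/
def covMatrix {n : ℕ} (F : Measure (Fin n → ℂ)) : Matrix (Fin n) (Fin n) ℂ :=
  Matrix.of fun i j => ∫ a, a i * conj (a j) ∂F

/-- The sampling matrix A = (1/√m) Σᵢ eᵢ aᵢ*. -/
def samplingMatrix {m n : ℕ} (a : Fin m → Fin n → ℂ) : Matrix (Fin m) (Fin n) ℂ :=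
  Matrix.of fun k j => ((Real.sqrt m : ℂ))⁻¹ * conj (a k j)

/-- Orthogonal projector onto vectors supported on T. -/
def projT {n : ℕ} (T : Finset (Fin n)) : Matrix (Fin n) (Fin n) ℂ :=
  Matrix.of fun i j => if i = j ∧ i ∈ T then 1 else 0

/-- The sign vector sgn(x): xᵢ/|xᵢ| on supp(x) and 0 elsewhere. -/
def sgnVec {n : ℕ} (x : Fin n → ℂ) : Fin n → ℂ :=
  fun i => if x i = 0 then 0 else x i / (‖x i‖ : ℂ)

/-- t is an almost sure bound for both incoherence quantities
    max_i |⟨a,eᵢ⟩|² and max_i |⟨a, E[aa*]⁻¹ eᵢ⟩|². -/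
def IncohBound {n : ℕ} (F : Measure (Fin n → ℂ)) (t : ℝ) : Prop :=
  ∀ᵐ a ∂F, ∀ i, ‖a i‖ ^ 2 ≤ t ∧ ‖∑ j, conj (a j) * (covMatrix F)⁻¹ j i‖ ^ 2 ≤ t

/-- μ is the incoherence parameter: the smallest almost sure incoherence bound. -/
def IsIncoherenceParam {n : ℕ} (F : Measure (Fin n → ℂ)) (μ : ℝ) : Prop :=
  IsLeast {t | IncohBound F t} μ

/-- x is the unique minimizer of the ℓ₁ norm among solutions of A x̄ = A x. -/
def UniqueL1Min {m n : ℕ} (A : Matrix (Fin m) (Fin n) ℂ) (x : Fin n → ℂ) : Prop :=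
  ∀ y : Fin n → ℂ, A.mulVec y = A.mulVec x → y ≠ x → l1norm x < l1norm y

/-! Since `P_T` is idempotent and fixes `sgn x`, one golfing step acts on the residual as
`q_{i+1} = P_T (I - (m/m_i) A_i* A_i X) P_T q_i` and adds `(m/m_i) P_{T^c} A_i* A_i X P_T q_i`
to the off-support part of `v`. The first condition therefore contracts `‖q‖₂` by `c_i` per
step, starting from `‖q_0‖₂ = ‖sgn x‖₂ = √|T| ≤ √s`; the second bounds the increments of
`‖(v_i)_{T^c}‖_∞` by `t_i ‖q_i‖₂`, and the triangle inequality sums them. -/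

section Projector

variable {n : ℕ}

lemma projT_eq_diagonal (T : Finset (Fin n)) :
    projT T = Matrix.diagonal fun i => if i ∈ T then 1 else 0 := by
  ext i j
  by_cases hij : i = j
  · subst hij; simp [projT]
  · simp [projT, hij]

lemma projT_mulVec_apply (T : Finset (Fin n)) (w : Fin n → ℂ) (i : Fin n) :
    (projT T *ᵥ w) i = if i ∈ T then w i else 0 := by
  simp [projT_eq_diagonal, mulVec_diagonal]

lemma isIdempotentElem_projT (T : Finset (Fin n)) : IsIdempotentElem (projT T) := by
  rw [IsIdempotentElem, projT_eq_diagonal, diagonal_mul_diagonal]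
  congr 1
  funext i
  split_ifs <;> simp

lemma projT_support_mulVec_sgnVec (x : Fin n → ℂ) :
    projT (Finset.univ.filter fun i => x i ≠ 0) *ᵥ sgnVec x = sgnVec x := by
  funext i
  rw [projT_mulVec_apply]
  by_cases h : x i = 0 <;> simp [sgnVec, h]

end Projector

section Norms

variable {n : ℕ}

lemma norm_sgnVec_apply (x : Fin n → ℂ) (i : Fin n) :
    ‖sgnVec x i‖ = if x i ≠ 0 then 1 else 0 := by
  by_cases h : x i = 0 <;> simp [sgnVec, h]

lemma l2norm_sgnVec (x : Fin n → ℂ) : l2norm (sgnVec x) = Real.sqrt (sparsity x) := by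
  simp only [l2norm, sparsity, norm_sgnVec_apply, ite_pow, one_pow, ne_eq, zero_pow two_ne_zero,
    Finset.sum_boole]

lemma le_linfNorm (v : Fin n → ℂ) (i : Fin n) : ‖v i‖ ≤ linfNorm v :=
  le_ciSup (f := fun i => ‖v i‖) (Set.finite_range _).bddAbove i

lemma linfNorm_nonneg (v : Fin n → ℂ) : 0 ≤ linfNorm v :=
  Real.iSup_nonneg fun _ => norm_nonneg _

lemma linfNorm_le {v : Fin n → ℂ} {r : ℝ} (hr : 0 ≤ r) (h : ∀ i, ‖v i‖ ≤ r) :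
    linfNorm v ≤ r :=
  Real.iSup_le h hr

lemma linfNorm_zero : linfNorm (0 : Fin n → ℂ) = 0 :=
  le_antisymm (linfNorm_le le_rfl fun _ => by simp) (linfNorm_nonneg 0)

lemma linfNorm_add_le (a b : Fin n → ℂ) : linfNorm (a + b) ≤ linfNorm a + linfNorm b :=
  linfNorm_le (add_nonneg (linfNorm_nonneg a) (linfNorm_nonneg b)) fun i =>
    (norm_add_le _ _).trans (add_le_add (le_linfNorm a i) (le_linfNorm b i))

end Norms

section Recursion

variable {l : ℕ}

lemma Fin.filter_val_lt_succ {k : ℕ} (hk : k < l) :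
    (Finset.univ.filter fun j : Fin l => (j : ℕ) < k + 1) =
      insert ⟨k, hk⟩ (Finset.univ.filter fun j : Fin l => (j : ℕ) < k) := by
  ext j
  simp only [Finset.mem_filter, Finset.mem_univ, true_and, Finset.mem_insert, Fin.ext_iff]
  omega

lemma Fin.prod_ite_val_lt_succ (c : Fin l → ℝ) {k : ℕ} (hk : k < l) :
    (∏ j : Fin l, if (j : ℕ) < k + 1 then c j else 1) =
      c ⟨k, hk⟩ * ∏ j : Fin l, if (j : ℕ) < k then c j else 1 := by
  rw [← Finset.prod_filter, ← Finset.prod_filter, Fin.filter_val_lt_succ hk,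
    Finset.prod_insert (by simp)]

lemma Fin.sum_ite_val_lt_succ (f : Fin l → ℝ) {k : ℕ} (hk : k < l) :
    (∑ j : Fin l, if (j : ℕ) < k + 1 then f j else 0) =
      f ⟨k, hk⟩ + ∑ j : Fin l, if (j : ℕ) < k then f j else 0 := by
  rw [← Finset.sum_filter, ← Finset.sum_filter, Fin.filter_val_lt_succ hk,
    Finset.sum_insert (by simp)]

lemma le_mul_prod_of_le_mul_step {a : ℕ → ℝ} {c : Fin l → ℝ} {B : ℝ} (hc : ∀ i, 0 ≤ c i)
    (h0 : a 0 ≤ B) (hstep : ∀ k (hk : k < l), a (k + 1) ≤ c ⟨k, hk⟩ * a k) :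
    ∀ k ≤ l, a k ≤ B * ∏ j : Fin l, if (j : ℕ) < k then c j else 1 := by
  intro k
  induction k with
  | zero => simpa using h0
  | succ k ih =>
    intro hk
    calc a (k + 1) ≤ c ⟨k, hk⟩ * a k := hstep k hk
      _ ≤ c ⟨k, hk⟩ * (B * ∏ j : Fin l, if (j : ℕ) < k then c j else 1) :=
        mul_le_mul_of_nonneg_left (ih (Nat.le_of_lt hk)) (hc _)
      _ = B * ∏ j : Fin l, if (j : ℕ) < k + 1 then c j else 1 := by
        rw [Fin.prod_ite_val_lt_succ c hk]; ring

lemma le_sum_of_le_add_step {a b : ℕ → ℝ} {t : Fin l → ℝ} (h0 : b 0 ≤ 0)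
    (hstep : ∀ k (hk : k < l), b (k + 1) ≤ t ⟨k, hk⟩ * a k + b k) :
    ∀ k ≤ l, b k ≤ ∑ i : Fin l, if (i : ℕ) < k then t i * a i else 0 := by
  intro k
  induction k with
  | zero => simpa using h0
  | succ k ih =>
    intro hk
    rw [Fin.sum_ite_val_lt_succ (fun i => t i * a i) hk]
    exact (hstep k hk).trans (add_le_add_right (ih (Nat.le_of_lt hk)) _)

end Recursion

section GolfingStep

variable {R ι : Type*} [CommRing R] [Fintype ι] {P : Matrix ι ι R} {g : ι → R}

lemma mulVec_sub_mulVec_of_isIdempotentElem (hP : IsIdempotentElem P) (hg : P *ᵥ g = g)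
    (v : ι → R) : P *ᵥ (g - P *ᵥ v) = g - P *ᵥ v := by
  rw [mulVec_sub, hg, mulVec_mulVec, hP.eq]

lemma golfing_offSupport_step (hP : IsIdempotentElem P) (hg : P *ᵥ g = g) (Q B : Matrix ι ι R)
    (σ : R) (v : ι → R) :
    Q *ᵥ (σ • B *ᵥ (P *ᵥ (g - v)) + v) = (σ • (Q * B * P)) *ᵥ (g - P *ᵥ v) + Q *ᵥ v := by
  rw [mulVec_sub P g, hg, smul_mulVec, ← mulVec_mulVec, ← mulVec_mulVec,
    mulVec_sub_mulVec_of_isIdempotentElem hP hg, mulVec_add, mulVec_smul]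

variable [DecidableEq ι]

lemma golfing_residual_step (hP : IsIdempotentElem P) (hg : P *ᵥ g = g) (B : Matrix ι ι R)
    (σ : R) (v : ι → R) :
    g - P *ᵥ (σ • B *ᵥ (P *ᵥ (g - v)) + v) = (P * (1 - σ • B) * P) *ᵥ (g - P *ᵥ v) := by
  have hr := mulVec_sub_mulVec_of_isIdempotentElem hP hg v
  rw [mulVec_sub P g, hg]
  set r := g - P *ᵥ v with hr_def
  rw [← mulVec_mulVec, hr, ← mulVec_mulVec, sub_mulVec, one_mulVec, smul_mulVec,
    mulVec_sub P r, mulVec_add, mulVec_smul, hr, hr_def]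
  abel

end GolfingStep

theorem statement15_general {n s : ℕ} (x : Fin n → ℂ) (hx : sparsity x ≤ s)
    (T : Finset (Fin n)) (hT : T = Finset.univ.filter fun i => x i ≠ 0)
    (X : Matrix (Fin n) (Fin n) ℂ)
    (l : ℕ)
    (md : Fin l → ℕ) (A : (i : Fin l) → Matrix (Fin (md i)) (Fin n) ℂ)
    (m : ℝ) (mi : Fin l → ℝ)
    (v : ℕ → Fin n → ℂ) (q : ℕ → Fin n → ℂ)
    (hv0 : v 0 = 0)
    (hq : ∀ i, q i = sgnVec x - (projT T).mulVec (v i))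
    (hv : ∀ (i : ℕ) (h : i < l),
      v (i + 1) = ((m / mi ⟨i, h⟩ : ℝ) : ℂ) •
          ((A ⟨i, h⟩)ᴴ * A ⟨i, h⟩ * X).mulVec ((projT T).mulVec (sgnVec x - v i)) + v i)
    (c t : Fin l → ℝ) (hc : ∀ i, 0 ≤ c i) (ht : ∀ i, 0 ≤ t i)
    (hcond1 : ∀ i : Fin l,
      l2norm ((projT T * (1 - ((m / mi i : ℝ) : ℂ) • ((A i)ᴴ * A i * X)) *
          projT T).mulVec (q i.1)) ≤ c i * l2norm (q i.1))
    (hcond2 : ∀ i : Fin l,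
      linfNorm ((((m / mi i : ℝ) : ℂ) •
          (projT Tᶜ * ((A i)ᴴ * A i * X) * projT T)).mulVec (q i.1)) ≤
        t i * l2norm (q i.1)) :
    l2norm (q l) ≤ Real.sqrt s * (∏ i : Fin l, c i) ∧
    linfNorm ((projT Tᶜ).mulVec (v l)) ≤
      Real.sqrt s * (∑ i : Fin l, t i *
        ∏ j : Fin l, if (j : ℕ) < (i : ℕ) then c j else 1) := by
  have hP := isIdempotentElem_projT T
  have hsgn : projT T *ᵥ sgnVec x = sgnVec x := hT ▸ projT_support_mulVec_sgnVec x
  have hq0 : l2norm (q 0) ≤ Real.sqrt s := by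
    rw [hq 0, hv0, mulVec_zero, sub_zero, l2norm_sgnVec]
    exact Real.sqrt_le_sqrt (Nat.cast_le.mpr hx)
  have hq_step : ∀ k (hk : k < l), l2norm (q (k + 1)) ≤ c ⟨k, hk⟩ * l2norm (q k) := by
    intro k hk
    rw [hq (k + 1), hv k hk, golfing_residual_step hP hsgn, ← hq k]
    exact hcond1 ⟨k, hk⟩
  have hv_step : ∀ k (hk : k < l), linfNorm (projT Tᶜ *ᵥ v (k + 1)) ≤
      t ⟨k, hk⟩ * l2norm (q k) + linfNorm (projT Tᶜ *ᵥ v k) := by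
    intro k hk
    rw [hv k hk, golfing_offSupport_step hP hsgn, ← hq k]
    exact (linfNorm_add_le _ _).trans (add_le_add (hcond2 ⟨k, hk⟩) le_rfl)
  have hq_le := le_mul_prod_of_le_mul_step (a := fun k => l2norm (q k)) hc hq0 hq_step
  have hv_le := le_sum_of_le_add_step (b := fun k => linfNorm (projT Tᶜ *ᵥ v k))
    (by simp only [hv0, mulVec_zero, linfNorm_zero, le_refl]) hv_step l le_rfl
  refine ⟨?_, hv_le.trans ?_⟩
  · simpa only [Fin.is_lt, if_true] using hq_le l le_rfl
  · rw [Finset.mul_sum]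
    refine Finset.sum_le_sum fun i _ => ?_
    rw [if_pos i.is_lt, mul_left_comm]
    exact mul_le_mul_of_nonneg_left (hq_le i i.is_lt.le) (ht i)

/-- Golfing scheme estimates: if each step satisfies the two tail conditions with
parameters c_i and t_i, then ‖q_l‖₂ ≤ √s ∏ c_i and
‖(v_l)_{T^c}‖_∞ ≤ √s (t₁ + Σ_{i≥2} t_i ∏_{j<i} c_j). -/
theorem statement15 {n s : ℕ} (x : Fin n → ℂ) (hx : sparsity x ≤ s)
    (T : Finset (Fin n)) (hT : T = Finset.univ.filter fun i => x i ≠ 0)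
    (X : Matrix (Fin n) (Fin n) ℂ)
    (l : ℕ) (hl : 0 < l)
    (md : Fin l → ℕ) (A : (i : Fin l) → Matrix (Fin (md i)) (Fin n) ℂ)
    (m : ℝ) (hm : 0 < m) (mi : Fin l → ℝ)
    (v : ℕ → Fin n → ℂ) (q : ℕ → Fin n → ℂ)
    (hv0 : v 0 = 0)
    (hq : ∀ i, q i = sgnVec x - (projT T).mulVec (v i))
    (hv : ∀ (i : ℕ) (h : i < l),
      v (i + 1) = ((m / mi ⟨i, h⟩ : ℝ) : ℂ) •
          ((A ⟨i, h⟩)ᴴ * A ⟨i, h⟩ * X).mulVec ((projT T).mulVec (sgnVec x - v i)) + v i)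
    (c t : Fin l → ℝ) (hc : ∀ i, 0 ≤ c i) (ht : ∀ i, 0 ≤ t i)
    (hcond1 : ∀ i : Fin l,
      l2norm ((projT T * (1 - ((m / mi i : ℝ) : ℂ) • ((A i)ᴴ * A i * X)) *
          projT T).mulVec (q i.1)) ≤ c i * l2norm (q i.1))
    (hcond2 : ∀ i : Fin l,
      linfNorm ((((m / mi i : ℝ) : ℂ) •
          (projT Tᶜ * ((A i)ᴴ * A i * X) * projT T)).mulVec (q i.1)) ≤
        t i * l2norm (q i.1)) :
    l2norm (q l) ≤ Real.sqrt s * (∏ i : Fin l, c i) ∧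
    linfNorm ((projT Tᶜ).mulVec (v l)) ≤
      Real.sqrt s * (∑ i : Fin l, t i *
        ∏ j : Fin l, if (j : ℕ) < (i : ℕ) then c j else 1) :=
  statement15_general x hx T hT X l md A m mi v q hv0 hq hv c t hc ht hcond1 hcond2
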